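/- Let ν ≥ 1/2 and define a_n = Γ(ν+1) Γ(n/2) / (√π · (n−1)! · Γ((n+1)/2 + ν)) for n ≥ 2, with a_1 = 1. Then for all n ≥ 1, a_n / a_{n+1} ≥ n + 1. -/

import Mathlib

/-!
Put `x = n / 2`. The closed formula for `a_n` also holds at `n = 1` (as `Γ(1/2) = √π`), and
`a_n / a_{n+1} = 2 Γ(x + 1) Γ(x + 1 + ν) / (Γ(x + 1/2) Γ(x + 1/2 + ν))`. Since
`(n + 1) Γ(x + 1/2) = 2 Γ(x + 3/2)`, the claim becomes
`Γ(x + 3/2) Γ(x + ν + 1/2) ≤ Γ(x + 1) Γ(x + ν + 1)`.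
This is log-convexity of `Γ`: the increment `log Γ(u + 1/2) - log Γ(u)` is nondecreasing in `u`,
and `x + 1 ≤ x + ν + 1/2` because `ν ≥ 1/2`.
-/

open Real Nat

theorem ConvexOn.map_add_add_le {𝕜 : Type*} [Field 𝕜] [LinearOrder 𝕜] [IsStrictOrderedRing 𝕜]
    {s : Set 𝕜} {f : 𝕜 → 𝕜} (hf : ConvexOn 𝕜 s f) {x y h : 𝕜} (hx : x ∈ s) (hyh : y + h ∈ s)
    (hxy : x ≤ y) (hh : 0 ≤ h) : f (x + h) + f y ≤ f x + f (y + h) := by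
  obtain hd | hd := (show 0 ≤ y + h - x by linarith).eq_or_lt
  · obtain rfl : h = 0 := by linarith
    obtain rfl : y = x := by linarith
    rw [add_zero]
  -- `x + h` and `y` are the convex combinations of `x` and `y + h` with weights `l` and `1 - l`
  set l := h / (y + h - x)
  have hl1 : 1 - l ≥ 0 := sub_nonneg.2 (div_le_one_of_le₀ (by linarith) hd.le)
  have hl : l * (y + h - x) = h := div_mul_cancel₀ _ hd.ne'
  have hxh := hf.2 hx hyh hl1 (div_nonneg hh hd.le) (sub_add_cancel 1 l)
  have hy := hf.2 hx hyh (div_nonneg hh hd.le) hl1 (add_sub_cancel l 1)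
  simp only [smul_eq_mul] at hxh hy
  rw [show (1 - l) * x + l * (y + h) = x + h by linear_combination hl] at hxh
  rw [show l * x + (1 - l) * (y + h) = y by linear_combination -hl] at hy
  linear_combination hxh + hy

theorem Real.Gamma_add_mul_Gamma_le_Gamma_mul_Gamma_add {s t h : ℝ} (hs : 0 < s) (hst : s ≤ t)
    (hh : 0 ≤ h) : Gamma (s + h) * Gamma t ≤ Gamma s * Gamma (t + h) := by
  have hlog := convexOn_log_Gamma.map_add_add_le hs (Set.mem_Ioi.2 (by linarith)) hst hh
  simp only [Function.comp_apply] at hlog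
  have hpos {u : ℝ} (hu : 0 < u) : 0 < Gamma u := Gamma_pos_of_pos hu
  have hsh := hpos (show 0 < s + h by linarith)
  have ht := hpos (show 0 < t by linarith)
  have hth := hpos (show 0 < t + h by linarith)
  rw [← log_le_log_iff (mul_pos hsh ht) (mul_pos (hpos hs) hth), log_mul hsh.ne' ht.ne',
    log_mul (hpos hs).ne' hth.ne']
  exact hlog

noncomputable def besselStruveCoeff (ν : ℝ) (n : ℕ) : ℝ :=
  Gamma (ν + 1) * Gamma ((n : ℝ) / 2) /
    (√π * ((n - 1)! : ℝ) * Gamma (((n : ℝ) + 1) / 2 + ν))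

theorem besselStruveCoeff_one {ν : ℝ} (hν : -1 < ν) : besselStruveCoeff ν 1 = 1 := by
  have : Gamma (ν + 1) ≠ 0 := (Gamma_pos_of_pos (by linarith)).ne'
  norm_num [besselStruveCoeff, Gamma_one_half_eq, add_comm 1 ν]
  field_simp

theorem besselStruveCoeff_div_succ {ν : ℝ} (hν : -1 < ν) {n : ℕ} (hn : 1 ≤ n) :
    besselStruveCoeff ν n / besselStruveCoeff ν (n + 1) =
      2 * Gamma (n / 2 + 1) * Gamma (n / 2 + 1 + ν) /
        (Gamma (n / 2 + 1 / 2) * Gamma (n / 2 + 1 / 2 + ν)) := by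
  have hn' : (1 : ℝ) ≤ n := by exact_mod_cast hn
  have hx : (0 : ℝ) < n / 2 := by positivity
  have hpos {u : ℝ} (hu : 0 < u) : Gamma u ≠ 0 := (Gamma_pos_of_pos hu).ne'
  have := hpos (show 0 < ν + 1 by linarith)
  have := hpos (show 0 < (n : ℝ) / 2 + 1 / 2 by linarith)
  have := hpos (show 0 < (n : ℝ) / 2 + 1 / 2 + ν by linarith)
  have := hpos (show 0 < (n : ℝ) / 2 + 1 + ν by linarith)
  have := hpos hx
  simp only [besselStruveCoeff, add_tsub_cancel_right, ← mul_factorial_pred (n := n) (by omega),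
    Gamma_add_one hx.ne']
  push_cast
  rw [show ((n : ℝ) + 1) / 2 = n / 2 + 1 / 2 by ring,
    show ((n : ℝ) + 1 + 1) / 2 + ν = n / 2 + 1 + ν by ring]
  field_simp

theorem succ_le_besselStruveCoeff_div_succ {ν : ℝ} (hν : 1 / 2 ≤ ν) {n : ℕ} (hn : 1 ≤ n) :
    (n : ℝ) + 1 ≤ besselStruveCoeff ν n / besselStruveCoeff ν (n + 1) := by
  have hx : (0 : ℝ) < n / 2 := by positivity
  have key := Gamma_add_mul_Gamma_le_Gamma_mul_Gamma_add (s := n / 2 + 1) (t := n / 2 + 1 / 2 + ν)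
    (h := 1 / 2) (by positivity) (by linarith) (by norm_num)
  rw [show (n : ℝ) / 2 + 1 + 1 / 2 = n / 2 + 1 / 2 + 1 by ring, Gamma_add_one (by positivity),
    show (n : ℝ) / 2 + 1 / 2 + ν + 1 / 2 = n / 2 + 1 + ν by ring] at key
  have hden : 0 < Gamma (n / 2 + 1 / 2) * Gamma (n / 2 + 1 / 2 + ν) :=
    mul_pos (Gamma_pos_of_pos (by positivity)) (Gamma_pos_of_pos (by linarith))
  rw [besselStruveCoeff_div_succ (by linarith) hn, le_div_iff₀ hden]
  linear_combination 2 * key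

theorem coeff_ratio_ge (ν : ℝ) (hν : 1/2 ≤ ν) (a : ℕ → ℝ) (ha1 : a 1 = 1)
    (ha : ∀ n : ℕ, 2 ≤ n → a n = Real.Gamma (ν + 1) * Real.Gamma ((n : ℝ) / 2) /
      (Real.sqrt Real.pi * ((n - 1).factorial : ℝ) * Real.Gamma (((n : ℝ) + 1) / 2 + ν))) :
    ∀ n : ℕ, 1 ≤ n → a n / a (n + 1) ≥ (n : ℝ) + 1 := by
  have ha_eq : ∀ m, 1 ≤ m → a m = besselStruveCoeff ν m := by
    intro m hm
    rcases hm.eq_or_lt with rfl | hm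
    · rw [ha1, besselStruveCoeff_one (by linarith)]
    · exact ha m hm
  intro n hn
  rw [ha_eq n hn, ha_eq (n + 1) (by omega)]
  exact succ_le_besselStruveCoeff_div_succ hν hn
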